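/- arXiv:1711.01980 — 6 statements merged into one kernel-verified Lean document; each statement's English description precedes it below -/
import Mathlib

section
/- Let n, P, Y be integers with 0 < P < n and Y = n − P, and let μ be a real number with log n ≤ μ ≤ Y. Then the probability, over a uniformly random permutation of the n items, that there exists a set of ⌈4nμ/P⌉ consecutive positions all of which are occupied by yellow items, is at most n/e^μ. Equivalently, the number of permutations of the n items for which some interval of ⌈4nμ/P⌉ consecutive positions contains only yellow items is at most n!·n/e^μ. -/
/-!
At most `(n - L)! · Y(Y-1)⋯(Y-L+1)` permutations put only yellow items on a given window of
`L = ⌈4nμ/P⌉` consecutive positions, and this is `≤ n! (Y/n)^L = n! (1 - P/n)^L ≤ n! e^{-LP/n}`,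
which is at most `n! e^{-μ}` because `LP/n ≥ μ`. As `μ > 0` forces `L ≥ 1`, there are at most `n`
windows, and a union bound finishes.
-/

open Finset Equiv Nat

section PermCount

variable {α : Type*} [Fintype α] [DecidableEq α]

theorem card_perm_fixing_pointwise (S : Finset α) :
    #{σ : Perm α | ∀ i ∈ S, σ i = i} = (Fintype.card α - #S)! := by
  rw [← Fintype.card_subtype, ← card_compl, ← Fintype.card_coe Sᶜ, ← Fintype.card_perm]
  exact Fintype.card_congr ((Perm.subtypeEquivSubtypePerm (· ∈ Sᶜ)).trans
    (Equiv.subtypeEquivRight fun σ => by simp)).symm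

theorem card_perm_extending_le (S : Finset α) (g : S → α) :
    #{σ : Perm α | ∀ i : S, σ i = g i} ≤ (Fintype.card α - #S)! := by
  rcases Finset.eq_empty_or_nonempty {σ : Perm α | ∀ i : S, σ i = g i} with h | ⟨σ₀, hσ₀⟩
  · rw [h]; exact Nat.zero_le _
  rw [← card_perm_fixing_pointwise]
  refine card_le_card_of_injOn (σ₀⁻¹ * ·) (fun σ hσ => ?_) (mul_right_injective _).injOn
  simp only [mem_coe, mem_filter, mem_univ, true_and] at hσ₀ hσ ⊢
  intro i hi
  rw [Perm.mul_apply, hσ ⟨i, hi⟩, ← hσ₀ ⟨i, hi⟩, ← Perm.mul_apply, inv_mul_cancel, Perm.one_apply]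

theorem card_perm_mapsTo_le (S T : Finset α) :
    #{σ : Perm α | ∀ i ∈ S, σ i ∈ T} ≤ (Fintype.card α - #S)! * (#T).descFactorial #S := by
  let coeEmb : (S ↪ T) ↪ (S → α) := ⟨fun f i => f i, fun f f' h => by
    ext i; exact congrFun h i⟩
  have := card_le_mul_card_image_of_maps_to (f := fun (σ : Perm α) (i : S) => σ i)
    (s := {σ : Perm α | ∀ i ∈ S, σ i ∈ T}) (t := univ.map coeEmb) ?_ (Fintype.card α - #S)! ?_
  · simpa [Fintype.card_embedding_eq] using this
  · intro σ hσ
    simp only [mem_filter, mem_univ, true_and] at hσ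
    let f : S ↪ T := ⟨fun i => ⟨σ i, hσ i i.2⟩, fun i j h => by
      simpa using congrArg Subtype.val h⟩
    exact mem_map_of_mem coeEmb (mem_univ f)
  · intro g _
    refine (card_le_card fun σ hσ => ?_).trans (card_perm_extending_le S g)
    simp only [mem_filter, mem_univ, true_and] at hσ ⊢
    exact fun i => congrFun hσ.2 i

end PermCount

namespace Nat

theorem descFactorial_mul_pow_le_pow_mul_descFactorial {Y n : ℕ} (h : Y ≤ n) (L : ℕ) :
    Y.descFactorial L * n ^ L ≤ Y ^ L * n.descFactorial L := by
  induction L with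
  | zero => simp
  | succ L ih =>
    have step : (Y - L) * n ≤ Y * (n - L) := by
      rw [Nat.sub_mul, Nat.mul_sub, Nat.mul_comm L]
      exact Nat.sub_le_sub_left (Nat.mul_le_mul_right L h) _
    calc Y.descFactorial (L + 1) * n ^ (L + 1)
        = (Y - L) * n * (Y.descFactorial L * n ^ L) := by rw [descFactorial_succ, pow_succ]; ring
      _ ≤ Y * (n - L) * (Y ^ L * n.descFactorial L) := Nat.mul_le_mul step ih
      _ = Y ^ (L + 1) * n.descFactorial (L + 1) := by rw [descFactorial_succ, pow_succ]; ring

theorem factorial_sub_mul_descFactorial_mul_pow_le {Y n : ℕ} (h : Y ≤ n) (L : ℕ) :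
    (n - L)! * Y.descFactorial L * n ^ L ≤ n ! * Y ^ L := by
  rcases le_or_gt L n with hL | hL
  · rw [← factorial_mul_descFactorial hL, mul_assoc, mul_assoc, Nat.mul_comm _ (Y ^ L)]
    exact Nat.mul_le_mul_left _ (descFactorial_mul_pow_le_pow_mul_descFactorial h L)
  · simp [descFactorial_eq_zero_iff_lt.2 (h.trans_lt hL)]

end Nat

def window (n a L : ℕ) : Finset (Fin n) := {i | a ≤ (i : ℕ) ∧ (i : ℕ) < a + L}

theorem card_window {n a L : ℕ} (h : a + L ≤ n) : #(window n a L) = L := by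
  have : window n a L = (Ico a (a + L)).attachFin fun m hm => by
      rw [mem_Ico] at hm; omega := by
    ext i
    simp [window, mem_attachFin, mem_Ico]
  rw [this, card_attachFin, card_Ico, Nat.add_sub_cancel_left]

theorem card_perm_exists_window_le {n L : ℕ} (hL : 1 ≤ L) (T : Finset (Fin n)) :
    {σ : Perm (Fin n) | ∃ a, a + L ≤ n ∧ ∀ i ∈ window n a L, σ i ∈ T}.ncard ≤
      n * ((n - L)! * (#T).descFactorial L) := by
  calc _ ≤ (((range (n + 1 - L)).biUnion fun a =>
          {σ : Perm (Fin n) | ∀ i ∈ window n a L, σ i ∈ T}) : Set (Perm (Fin n))).ncard := by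
        refine Set.ncard_le_ncard (fun σ ⟨a, ha, hσ⟩ => ?_) (Set.toFinite _)
        simp only [coe_biUnion, coe_filter, mem_univ, true_and, Set.mem_iUnion, mem_coe, mem_range]
        exact ⟨a, by omega, hσ⟩
    _ ≤ ∑ a ∈ range (n + 1 - L), #{σ : Perm (Fin n) | ∀ i ∈ window n a L, σ i ∈ T} := by
        rw [Set.ncard_coe_finset]
        exact card_biUnion_le
    _ ≤ ∑ _a ∈ range (n + 1 - L), (n - L)! * (#T).descFactorial L := by
        refine sum_le_sum fun a ha => ?_
        -- the two filters differ only in their `Decidable` instances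
        refine le_of_eq_of_le (by congr) ((card_perm_mapsTo_le (window n a L) T).trans_eq ?_)
        rw [card_window (by rw [mem_range] at ha; omega), Fintype.card_fin]
    _ ≤ n * ((n - L)! * (#T).descFactorial L) := by
        rw [sum_const, card_range, smul_eq_mul]
        exact Nat.mul_le_mul_right _ (by omega)

theorem sub_div_pow_le_exp_neg {n P μ : ℝ} {L : ℕ} (hn : 0 < n) (hPn : P ≤ n)
    (hμ : n * μ ≤ L * P) : ((n - P) / n) ^ L ≤ Real.exp (-μ) :=
  calc ((n - P) / n) ^ L = (1 - P / n) ^ L := by rw [sub_div, div_self hn.ne']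
    _ ≤ Real.exp (-(P / n)) ^ L :=
        pow_le_pow_left₀ (by rw [sub_nonneg, div_le_one hn]; exact hPn) (Real.one_sub_le_exp_neg _) L
    _ ≤ Real.exp (-μ) := by
        rw [← Real.exp_nat_mul, Real.exp_le_exp, mul_neg, neg_le_neg_iff, ← mul_div_assoc,
          le_div_iff₀ hn]
        linarith

theorem stmt_0_general (n P : ℕ) (hP : 0 < P) (hPn : P < n)
    (μ : ℝ) (hμl : Real.log n ≤ μ)
    (Pink : Finset (Fin n)) (hPink : Pink.card = P) :
    (({σ : Equiv.Perm (Fin n) |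
        ∃ a : ℕ, a + ⌈4 * (n : ℝ) * μ / (P : ℝ)⌉₊ ≤ n ∧
          ∀ i : Fin n, a ≤ (i : ℕ) → (i : ℕ) < a + ⌈4 * (n : ℝ) * μ / (P : ℝ)⌉₊ →
            σ i ∉ Pink}).ncard : ℝ)
      ≤ (n.factorial : ℝ) * n / Real.exp μ := by
  set L := ⌈4 * (n : ℝ) * μ / (P : ℝ)⌉₊
  have hn : (1 : ℝ) < n := by exact_mod_cast (show 1 < n by omega)
  have hμ : 0 < μ := (Real.log_pos hn).trans_le hμl
  have hLP : (n : ℝ) * μ ≤ L * P := by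
    have := Nat.le_ceil (4 * (n : ℝ) * μ / P)
    rw [div_le_iff₀ (by positivity)] at this
    nlinarith
  have hcount := card_perm_exists_window_le (L := L) (Nat.one_le_ceil_iff.2 (by positivity)) Pinkᶜ
  simp only [window, mem_filter, mem_univ, true_and, and_imp, mem_compl] at hcount
  rw [card_compl, Fintype.card_fin, hPink] at hcount
  have hfact := factorial_sub_mul_descFactorial_mul_pow_le (Nat.sub_le n P) L
  calc _ ≤ (n : ℝ) * ((n - L)! * (n - P).descFactorial L) := by exact_mod_cast hcount
    _ ≤ n * (n ! * (((n : ℝ) - P) / n) ^ L) := by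
        refine mul_le_mul_of_nonneg_left ?_ n.cast_nonneg
        rw [div_pow, mul_div_assoc', le_div_iff₀ (by positivity), ← Nat.cast_sub hPn.le]
        exact_mod_cast hfact
    _ ≤ n * (n ! * Real.exp (-μ)) := by
        gcongr
        exact sub_div_pow_le_exp_neg (by positivity) (by exact_mod_cast hPn.le) hLP
    _ = n ! * n / Real.exp μ := by rw [Real.exp_neg]; ring

/-- There are `n` items, a fixed set `Pink` of `P` of them is pink and the
remaining `Y = n - P` are yellow. For `log n ≤ μ ≤ Y`, the number of permutations
(assignments of items to positions) for which some interval of `⌈4nμ/P⌉` consecutive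
positions contains only yellow items is at most `n! · n / e^μ`. -/
theorem stmt_0 (n P Y : ℕ) (hP : 0 < P) (hPn : P < n) (hY : Y = n - P)
    (μ : ℝ) (hμl : Real.log n ≤ μ) (hμu : μ ≤ (Y : ℝ))
    (Pink : Finset (Fin n)) (hPink : Pink.card = P) :
    (({σ : Equiv.Perm (Fin n) |
        ∃ a : ℕ, a + ⌈4 * (n : ℝ) * μ / (P : ℝ)⌉₊ ≤ n ∧
          ∀ i : Fin n, a ≤ (i : ℕ) → (i : ℕ) < a + ⌈4 * (n : ℝ) * μ / (P : ℝ)⌉₊ →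
            σ i ∉ Pink}).ncard : ℝ)
      ≤ (n.factorial : ℝ) * n / Real.exp μ :=
  stmt_0_general n P hP hPn μ hμl Pink hPink
end

section
/- Let n, P, Y be integers with 0 < P < n and Y = n − P, and let μ be a real number with log n ≤ μ ≤ P. Then the probability, over a uniformly random permutation of the n items, that there exists a set of ⌊nμ/P⌋ consecutive positions such that more than 4μ of the items occupying these positions are pink, is at most n/4^μ. -/
/-!
Union bound over the at most `n` windows. Fix a window of `w = ⌊nμ/P⌋` positions and put
`k = ⌊4μ⌋ + 1`. If it holds at least `k` pink items, some `k`-subset `T` of the window is mapped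
into `Pink`, and for each `T` there are at most `P^(k) (n-k)!` such permutations. So the window
is bad with probability at most `C(w,k) P^(k) / n^(k) ≤ (wP/n)^k / k! ≤ μ^k / k!`, and
`μ^k / k! ≤ 4^(-μ)` because `(4μ)^k / k! ≤ e^(4μ)`, `4^k ≥ 4^(4μ)` and `4 + log 4 ≤ 4 log 4`.
-/

open Finset Equiv
open scoped Nat

namespace Equiv.Perm

variable {α : Type*} [Fintype α] [DecidableEq α]

theorem card_filter_eqOn_le (T : Finset α) (σ₀ : Perm α) :
    #{σ : Perm α | ∀ i ∈ T, σ i = σ₀ i} ≤ (Fintype.card α - #T)! := by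
  -- `σ` agrees with `σ₀` on `T` iff `σ₀⁻¹ * σ` fixes `T` pointwise, i.e. permutes only `Tᶜ`
  calc _ ≤ #((univ : Finset (Perm {x // x ∉ T})).image fun τ => σ₀ * ofSubtype τ) := by
        refine card_le_card fun σ hσ => ?_
        simp only [mem_filter, mem_univ, true_and] at hσ
        have hfix : ∀ i ∈ T, (σ₀⁻¹ * σ) i = i := fun i hi => by simp [hσ i hi]
        have hstable : ∀ x, (σ₀⁻¹ * σ) x ∉ T ↔ x ∉ T := fun x => by
          refine not_congr ⟨fun h => ?_, fun h => (hfix x h).symm ▸ h⟩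
          rwa [← (σ₀⁻¹ * σ).injective (hfix _ h)]
        refine mem_image.2 ⟨subtypePerm (σ₀⁻¹ * σ) hstable, mem_univ _, ?_⟩
        rw [ofSubtype_subtypePerm (p := (· ∉ T)) _ fun x hx hxT => hx (hfix x hxT),
          mul_inv_cancel_left]
    _ ≤ #(univ : Finset (Perm {x // x ∉ T})) := card_image_le
    _ = (Fintype.card α - #T)! := by
        rw [card_univ, Fintype.card_perm, Fintype.card_subtype_compl, Fintype.card_coe]

theorem card_filter_mapsTo_le (T S : Finset α) :
    #{σ : Perm α | ∀ i ∈ T, σ i ∈ S} ≤ (#S).descFactorial #T * (Fintype.card α - #T)! := by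
  let restrict : Perm α → (T → α) := fun σ i => σ i
  let toFun : (T ↪ S) → (T → α) := fun e i => e i
  have hmaps : ∀ σ ∈ ({σ : Perm α | ∀ i ∈ T, σ i ∈ S} : Finset _),
      restrict σ ∈ (univ : Finset (T ↪ S)).image toFun := fun σ hσ => by
    simp only [mem_filter, mem_univ, true_and] at hσ
    exact mem_image.2 ⟨⟨fun i => ⟨σ i, hσ i i.2⟩, fun i j h => Subtype.ext
      (σ.injective (congrArg Subtype.val h))⟩, mem_univ _, rfl⟩
  have hfiber : ∀ g ∈ (univ : Finset (T ↪ S)).image toFun,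
      #{σ ∈ ({σ : Perm α | ∀ i ∈ T, σ i ∈ S} : Finset _) | restrict σ = g}
        ≤ (Fintype.card α - #T)! := fun g _ => by
    obtain hempty | ⟨σ₀, hσ₀⟩ := Finset.eq_empty_or_nonempty
      {σ ∈ ({σ : Perm α | ∀ i ∈ T, σ i ∈ S} : Finset _) | restrict σ = g}
    · simp [hempty]
    refine le_trans (card_le_card fun σ hσ => ?_) (card_filter_eqOn_le T σ₀)
    simp only [mem_filter, mem_univ, true_and] at hσ hσ₀ ⊢
    exact fun i hi => (congrFun hσ.2 ⟨i, hi⟩).trans (congrFun hσ₀.2 ⟨i, hi⟩).symm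
  calc _ ≤ (Fintype.card α - #T)! * #((univ : Finset (T ↪ S)).image toFun) :=
        card_le_mul_card_image_of_maps_to hmaps _ hfiber
    _ ≤ (Fintype.card α - #T)! * #(univ : Finset (T ↪ S)) := by gcongr; exact card_image_le
    _ = _ := by rw [card_univ, Fintype.card_embedding_eq, Fintype.card_coe, Fintype.card_coe,
        mul_comm]

theorem card_filter_le_card_filter_apply_mem (W S : Finset α) (k : ℕ) :
    #{σ : Perm α | k ≤ #{i ∈ W | σ i ∈ S}}
      ≤ (#W).choose k * ((#S).descFactorial k * (Fintype.card α - k)!) := by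
  calc _ ≤ #((W.powersetCard k).biUnion fun T => {σ : Perm α | ∀ i ∈ T, σ i ∈ S}) := by
        refine card_le_card fun σ hσ => ?_
        simp only [mem_filter, mem_univ, true_and] at hσ
        obtain ⟨T, hT, hTcard⟩ := exists_subset_card_eq hσ
        refine mem_biUnion.2 ⟨T, mem_powersetCard.2 ⟨hT.trans (filter_subset _ _), hTcard⟩, ?_⟩
        simp only [mem_filter, mem_univ, true_and]
        exact fun i hi => (mem_filter.1 (hT hi)).2
    _ ≤ ∑ T ∈ W.powersetCard k, #{σ : Perm α | ∀ i ∈ T, σ i ∈ S} := card_biUnion_le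
    _ ≤ ∑ _T ∈ W.powersetCard k, (#S).descFactorial k * (Fintype.card α - k)! :=
        sum_le_sum fun T hT => (mem_powersetCard.1 hT).2 ▸ card_filter_mapsTo_le T S
    _ = _ := by rw [sum_const, card_powersetCard, smul_eq_mul]

end Equiv.Perm

theorem Nat.descFactorial_mul_pow_le_descFactorial_mul_pow {p n : ℕ} (hp : p ≤ n) :
    ∀ k, p.descFactorial k * n ^ k ≤ n.descFactorial k * p ^ k
  | 0 => by simp
  | k + 1 => by
    have hstep : (p - k) * n ≤ (n - k) * p := by
      rcases le_total k p with hkp | hpk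
      · zify [hkp, hkp.trans hp]; nlinarith
      · simp [Nat.sub_eq_zero_of_le hpk]
    calc p.descFactorial (k + 1) * n ^ (k + 1)
        = ((p - k) * n) * (p.descFactorial k * n ^ k) := by
          rw [Nat.descFactorial_succ, pow_succ]; ring
      _ ≤ ((n - k) * p) * (n.descFactorial k * p ^ k) :=
          Nat.mul_le_mul hstep (descFactorial_mul_pow_le_descFactorial_mul_pow hp k)
      _ = n.descFactorial (k + 1) * p ^ (k + 1) := by
          rw [Nat.descFactorial_succ, pow_succ]; ring

theorem pow_mul_four_rpow_le_factorial {μ : ℝ} (hμ : 0 ≤ μ) {k : ℕ} (hk : 4 * μ ≤ k) :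
    μ ^ k * 4 ^ μ ≤ k ! := by
  have hexp : (4 * μ) ^ k ≤ k ! * Real.exp (4 * μ) := by
    have := Real.pow_div_factorial_le_exp (x := 4 * μ) (by positivity) k
    rwa [div_le_iff₀ (by positivity), mul_comm (Real.exp _)] at this
  have hlog : 4 + Real.log 4 ≤ 4 * Real.log 4 := by
    have : Real.log 4 = 2 * Real.log 2 := by
      rw [show (4 : ℝ) = 2 ^ 2 by norm_num, Real.log_pow]; norm_num
    linarith [Real.log_two_gt_d9]
  have hfour : Real.exp (4 * μ) * 4 ^ μ ≤ 4 ^ k := by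
    rw [Real.rpow_def_of_pos (by norm_num), ← Real.exp_add,
      ← Real.exp_log (by norm_num : (0 : ℝ) < 4), ← Real.exp_nat_mul, Real.exp_log (by norm_num)]
    gcongr
    nlinarith [Real.log_pos (by norm_num : (1 : ℝ) < 4)]
  refine le_of_mul_le_mul_right ?_ (by positivity : (0 : ℝ) < 4 ^ k)
  calc μ ^ k * 4 ^ μ * 4 ^ k = (4 * μ) ^ k * 4 ^ μ := by rw [mul_pow]; ring
    _ ≤ k ! * Real.exp (4 * μ) * 4 ^ μ := by gcongr
    _ ≤ k ! * 4 ^ k := by rw [mul_assoc]; gcongr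

theorem choose_mul_descFactorial_mul_factorial_mul_rpow_le {n p w k : ℕ} {μ : ℝ} (hμ : 0 ≤ μ)
    (hk : 4 * μ < k) (hp : p ≤ n) (hw : (w : ℝ) * p ≤ n * μ) :
    ((w.choose k * (p.descFactorial k * (n - k)!) : ℕ) : ℝ) * 4 ^ μ ≤ n ! := by
  rcases lt_or_ge p k with hpk | hkp
  · simp [Nat.descFactorial_eq_zero_iff_lt.2 hpk]
  have hn : (0 : ℝ) < n := by
    have : (0 : ℝ) < k := by linarith
    exact_mod_cast (Nat.cast_pos.1 this).trans_le (hkp.trans hp)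
  have hchoose : (w.choose k : ℝ) ≤ w ^ k / k ! := Nat.choose_le_pow_div k w
  have hdesc : (p.descFactorial k : ℝ) ≤ n.descFactorial k * p ^ k / n ^ k := by
    rw [le_div_iff₀ (by positivity)]
    exact_mod_cast Nat.descFactorial_mul_pow_le_descFactorial_mul_pow hp k
  have hratio : ((w : ℝ) * p / n) ^ k ≤ μ ^ k := by
    gcongr
    rwa [div_le_iff₀ hn, mul_comm μ]
  have hfac : ((n - k)! : ℝ) * n.descFactorial k = n ! := by
    exact_mod_cast Nat.factorial_mul_descFactorial (hkp.trans hp)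
  push_cast
  calc (w.choose k : ℝ) * (p.descFactorial k * (n - k)!) * 4 ^ μ
      ≤ w ^ k / k ! * (n.descFactorial k * p ^ k / n ^ k * (n - k)!) * 4 ^ μ := by gcongr
    _ = (n - k)! * n.descFactorial k * (((w : ℝ) * p / n) ^ k * 4 ^ μ / k !) := by
        rw [div_pow, mul_pow]; field_simp
    _ ≤ (n - k)! * n.descFactorial k * (μ ^ k * 4 ^ μ / k !) := by gcongr
    _ ≤ (n - k)! * n.descFactorial k * 1 := by
        gcongr
        exact div_le_one_of_le₀ (pow_mul_four_rpow_le_factorial hμ hk.le) (by positivity)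
    _ = n ! := by rw [mul_one, hfac]

theorem card_window_le (n a w : ℕ) : #{i : Fin n | a ≤ (i : ℕ) ∧ (i : ℕ) < a + w} ≤ w := by
  calc _ ≤ #(Ico a (a + w)) :=
        card_le_card_of_injOn Fin.val (fun i hi => by simpa using hi) Fin.val_injective.injOn
    _ = w := by simp

theorem card_perm_window_le (n a w k : ℕ) (S : Finset (Fin n)) :
    #{σ : Equiv.Perm (Fin n) | k ≤ #{i : Fin n | a ≤ (i : ℕ) ∧ (i : ℕ) < a + w ∧ σ i ∈ S}}
      ≤ w.choose k * ((#S).descFactorial k * (n - k)!) := by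
  have hwindow : ∀ σ : Equiv.Perm (Fin n),
      ({i : Fin n | a ≤ (i : ℕ) ∧ (i : ℕ) < a + w ∧ σ i ∈ S} : Finset _)
        = {i ∈ ({i : Fin n | a ≤ (i : ℕ) ∧ (i : ℕ) < a + w} : Finset _) | σ i ∈ S} := by
    intro σ
    rw [filter_filter]
    simp only [and_assoc]
  simp only [hwindow]
  refine (Equiv.Perm.card_filter_le_card_filter_apply_mem _ S k).trans ?_
  rw [Fintype.card_fin]
  gcongr
  exact card_window_le n a w

theorem stmt_1_general (n P : ℕ)
    (μ : ℝ) (hμl : Real.log n ≤ μ)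
    (Pink : Finset (Fin n)) (hPink : Pink.card = P) :
    (({σ : Equiv.Perm (Fin n) |
        ∃ a : ℕ, a + ⌊(n : ℝ) * μ / (P : ℝ)⌋₊ ≤ n ∧
          4 * μ < ((Finset.univ.filter fun i : Fin n =>
            a ≤ (i : ℕ) ∧ (i : ℕ) < a + ⌊(n : ℝ) * μ / (P : ℝ)⌋₊ ∧ σ i ∈ Pink).card : ℝ)}).ncard : ℝ)
      ≤ (n.factorial : ℝ) * n / (4 : ℝ) ^ μ := by
  have hμ : 0 ≤ μ := (Real.log_natCast_nonneg n).trans hμl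
  set w := ⌊(n : ℝ) * μ / P⌋₊
  set k := ⌊(4 : ℝ) * μ⌋₊ + 1
  have hk : 4 * μ < k := by simpa [k] using Nat.lt_floor_add_one (4 * μ)
  have hw : (w : ℝ) * P ≤ n * μ := by
    rcases (Nat.cast_nonneg (α := ℝ) P).eq_or_lt with hP | hP
    · rw [← hP, mul_zero]; positivity
    · exact (le_div_iff₀ hP).1 (Nat.floor_le (by positivity))
  -- a window holding more than `4μ ≥ 0` pink items is nonempty, hence starts before `n`
  have hsub : {σ : Equiv.Perm (Fin n) | ∃ a : ℕ, a + w ≤ n ∧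
        4 * μ < (#{i : Fin n | a ≤ (i : ℕ) ∧ (i : ℕ) < a + w ∧ σ i ∈ Pink} : ℝ)}
      ⊆ ↑((range n).biUnion fun a => ({σ : Equiv.Perm (Fin n) |
          k ≤ #{i : Fin n | a ≤ (i : ℕ) ∧ (i : ℕ) < a + w ∧ σ i ∈ Pink}} : Finset _)) := by
    rintro σ ⟨a, -, hpink⟩
    have hkle : k ≤ #{i : Fin n | a ≤ (i : ℕ) ∧ (i : ℕ) < a + w ∧ σ i ∈ Pink} :=
      Nat.succ_le_of_lt ((Nat.floor_lt (by positivity)).2 hpink)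
    obtain ⟨i, hi⟩ := card_pos.1 (Nat.succ_pos _ |>.trans_le hkle)
    simp only [mem_filter, mem_univ, true_and] at hi
    simp only [coe_biUnion, coe_range, Set.mem_iUnion, Set.mem_Iio, coe_filter, mem_univ,
      true_and, Set.mem_ofPred_eq]
    exact ⟨a, hi.1.trans_lt i.2, hkle⟩
  have hcount := (Set.ncard_le_ncard hsub (finite_toSet _)).trans_eq (Set.ncard_coe_finset _)
    |>.trans <| card_biUnion_le.trans <|
      sum_le_card_nsmul _ _ _ fun a _ => card_perm_window_le n a w k Pink
  rw [le_div_iff₀ (by positivity)]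
  calc _ ≤ ((n * (w.choose k * (P.descFactorial k * (n - k)!)) : ℕ) : ℝ) * 4 ^ μ := by
        gcongr
        simpa [hPink] using hcount
    _ = n * (((w.choose k * (P.descFactorial k * (n - k)!)) : ℕ) * 4 ^ μ) := by push_cast; ring
    _ ≤ n * n ! := by
        gcongr
        exact choose_mul_descFactorial_mul_factorial_mul_rpow_le hμ hk
          (hPink ▸ card_le_univ Pink |>.trans_eq (Fintype.card_fin n)) hw
    _ = n ! * n := mul_comm _ _

/-- There are `n` items, a fixed set `Pink` of `P` of them is pink and the
remaining `Y = n - P` are yellow. For `log n ≤ μ ≤ P`, the number of permutations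
(assignments of items to positions) for which there is a set of `⌊nμ/P⌋` consecutive
positions occupied by more than `4μ` pink items is at most `n! · n / 4^μ`. -/
theorem stmt_1 (n P Y : ℕ) (hP : 0 < P) (hPn : P < n) (hY : Y = n - P)
    (μ : ℝ) (hμl : Real.log n ≤ μ) (hμu : μ ≤ (P : ℝ))
    (Pink : Finset (Fin n)) (hPink : Pink.card = P) :
    (({σ : Equiv.Perm (Fin n) |
        ∃ a : ℕ, a + ⌊(n : ℝ) * μ / (P : ℝ)⌋₊ ≤ n ∧
          4 * μ < ((Finset.univ.filter fun i : Fin n =>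
            a ≤ (i : ℕ) ∧ (i : ℕ) < a + ⌊(n : ℝ) * μ / (P : ℝ)⌋₊ ∧ σ i ∈ Pink).card : ℝ)}).ncard : ℝ)
      ≤ (n.factorial : ℝ) * n / (4 : ℝ) ^ μ :=
  stmt_1_general n P μ hμl Pink hPink
end

section
/- Let z > 1 be an integer, let Q be the z×z grid graph, and let U be its top row. Then for every partition (X,Y) of the vertex set of Q into two disjoint sets, the number of edges of Q having one endpoint in X and the other endpoint in Y is at least min(|U ∩ X|, |U ∩ Y|). -/
/-- The `z × z` grid graph: vertices `(i,j)` with `0 ≤ i,j < z` (0-indexed), and an edge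
between `(i,j)` and `(i',j')` iff `|i-i'| + |j-j'| = 1`. -/
def gridGraph (z : ℕ) : SimpleGraph (Fin z × Fin z) where
  Adj a b := ((a.1 : ℤ) - (b.1 : ℤ)).natAbs + ((a.2 : ℤ) - (b.2 : ℤ)).natAbs = 1
  symm := by constructor; intro a b h; omega
  loopless := by constructor; intro a h; simp at h

instance (z : ℕ) : DecidableRel (gridGraph z).Adj := fun a b =>
  inferInstanceAs (Decidable (((a.1 : ℤ) - (b.1 : ℤ)).natAbs + ((a.2 : ℤ) - (b.2 : ℤ)).natAbs = 1))

/-!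
Let `Y = Xᶜ`. If every column meets `Y`, then every column whose top vertex lies in `X` contains
an `X`–`Y` edge, and these edges are distinct, so the cut has at least `|U ∩ X|` edges;
symmetrically if every column meets `X`. Otherwise some column lies inside `X` and another inside
`Y`, so every row contains a cut edge and the cut has at least `z ≥ |U ∩ X|` edges.
-/

open Finset

namespace SimpleGraph

variable {V W : Type*} {G : SimpleGraph V} {H : SimpleGraph W}

variable (G) in
theorem card_interedges_comm [DecidableRel G.Adj] (s t : Finset V) :
    #(G.interedges s t) = #(G.interedges t s) :=
  have := G.symm
  Rel.card_interedges_comm s t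

theorem Preconnected.exists_adj_mem_not_mem (hH : H.Preconnected) {s : Set W} {u v : W}
    (hu : u ∈ s) (hv : v ∉ s) : ∃ x y, H.Adj x y ∧ x ∈ s ∧ y ∉ s := by
  obtain ⟨p⟩ := hH u v
  obtain ⟨d, -, hd⟩ := p.exists_boundary_dart s hu hv
  exact ⟨d.fst, d.snd, d.adj, hd⟩

theorem Preconnected.exists_map_mem_interedges_compl [Fintype V] [DecidableEq V]
    [DecidableRel G.Adj] (hH : H.Preconnected) (f : H →g G) {S : Finset V} {u v : W}
    (hu : f u ∈ S) (hv : f v ∉ S) : ∃ x y, (f x, f y) ∈ G.interedges S Sᶜ := by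
  obtain ⟨x, y, hxy, hx, hy⟩ := hH.exists_adj_mem_not_mem (s := f ⁻¹' S) hu hv
  exact ⟨x, y, G.mk_mem_interedges_iff.2 ⟨hx, mem_compl.2 hy, f.map_adj hxy⟩⟩

end SimpleGraph

namespace gridGraph

open SimpleGraph

variable {z : ℕ}

def column (j : Fin z) : pathGraph z →g gridGraph z where
  toFun i := (i, j)
  map_rel' h := by simp only [gridGraph, pathGraph_adj] at *; omega

def row (i : Fin z) : pathGraph z →g gridGraph z where
  toFun j := (i, j)
  map_rel' h := by simp only [gridGraph, pathGraph_adj] at *; omega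

variable (z) in
def topRow : Finset (Fin z × Fin z) := {v | (v.1 : ℕ) = 0}

theorem injOn_snd_topRow : Set.InjOn Prod.snd (topRow z : Set (Fin z × Fin z)) := by
  intro v hv w hw h
  simp only [topRow, coe_filter, mem_univ, true_and, Set.mem_ofPred_eq] at hv hw
  exact Prod.ext (Fin.ext (hv.trans hw.symm)) h

theorem card_topRow_inter_le (S : Finset (Fin z × Fin z)) : #(topRow z ∩ S) ≤ z := by
  simpa using card_le_card_of_injOn Prod.snd (fun _ _ ↦ mem_univ _)
    (injOn_snd_topRow.mono (coe_subset.2 inter_subset_left))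

theorem card_topRow_inter_le_card_interedges (S : Finset (Fin z × Fin z))
    (hcol : ∀ j, ∃ i, (i, j) ∉ S) : #(topRow z ∩ S) ≤ #((gridGraph z).interedges S Sᶜ) := by
  rw [← card_image_of_injOn (injOn_snd_topRow.mono (coe_subset.2 inter_subset_left))]
  refine card_le_card_of_surjOn (fun p ↦ p.1.2) fun j hj ↦ ?_
  obtain ⟨v, hv, rfl⟩ := mem_image.1 (mem_coe.1 hj)
  obtain ⟨i, hi⟩ := hcol v.2
  obtain ⟨a, b, hab⟩ := (pathGraph_preconnected z).exists_map_mem_interedges_compl (column v.2)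
    (u := v.1) (mem_inter.1 hv).2 hi
  exact ⟨_, hab, rfl⟩

theorem le_card_interedges (S : Finset (Fin z × Fin z)) (hX : ∃ j, ∀ i, (i, j) ∈ S)
    (hY : ∃ j, ∀ i, (i, j) ∉ S) : z ≤ #((gridGraph z).interedges S Sᶜ) := by
  obtain ⟨jx, hjx⟩ := hX
  obtain ⟨jy, hjy⟩ := hY
  simpa using card_le_card_of_surjOn (t := univ)
    (fun p : (Fin z × Fin z) × (Fin z × Fin z) ↦ p.1.1) fun i _ ↦ by
    obtain ⟨a, b, hab⟩ :=
      (pathGraph_preconnected z).exists_map_mem_interedges_compl (row i) (hjx i) (hjy i)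
    exact ⟨_, hab, rfl⟩

end gridGraph

open SimpleGraph gridGraph in
theorem stmt_5_general (z : ℕ) (X Y : Finset (Fin z × Fin z))
    (hdisj : Disjoint X Y) (hunion : X ∪ Y = Finset.univ) :
    min ((Finset.univ.filter fun v : Fin z × Fin z => (v.1 : ℕ) = 0) ∩ X).card
        ((Finset.univ.filter fun v : Fin z × Fin z => (v.1 : ℕ) = 0) ∩ Y).card
      ≤ ((X ×ˢ Y).filter fun p => (gridGraph z).Adj p.1 p.2).card := by
  obtain rfl : Y = Xᶜ := (IsCompl.compl_eq ⟨hdisj, codisjoint_iff.2 hunion⟩).symm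
  change min #(topRow z ∩ X) #(topRow z ∩ Xᶜ) ≤ #((gridGraph z).interedges X Xᶜ)
  by_cases hcolY : ∀ j, ∃ i, (i, j) ∉ X
  · exact (min_le_left _ _).trans (card_topRow_inter_le_card_interedges X hcolY)
  by_cases hcolX : ∀ j, ∃ i, (i, j) ∈ X
  · have := card_topRow_inter_le_card_interedges Xᶜ (by simpa using hcolX)
    rw [compl_compl, card_interedges_comm] at this
    exact (min_le_right _ _).trans this
  push Not at hcolY hcolX
  exact (min_le_left _ _).trans ((card_topRow_inter_le X).trans (le_card_interedges X hcolY hcolX))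

/-- Let `z > 1`, let `Q` be the `z × z` grid graph and `U` its top row
(the vertices whose first coordinate is `0`). For every partition `(X,Y)` of the vertex set
of `Q`, the number of edges of `Q` with one endpoint in `X` and the other in `Y` is at
least `min(|U ∩ X|, |U ∩ Y|)`. (Since `X` and `Y` are disjoint, each such edge corresponds
to exactly one ordered pair in `X × Y`.) -/
theorem stmt_5 (z : ℕ) (hz : 1 < z) (X Y : Finset (Fin z × Fin z))
    (hdisj : Disjoint X Y) (hunion : X ∪ Y = Finset.univ) :
    min ((Finset.univ.filter fun v : Fin z × Fin z => (v.1 : ℕ) = 0) ∩ X).card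
        ((Finset.univ.filter fun v : Fin z × Fin z => (v.1 : ℕ) = 0) ∩ Y).card
      ≤ ((X ×ˢ Y).filter fun p => (gridGraph z).Adj p.1 p.2).card :=
  stmt_5_general z X Y hdisj hunion
end

section
/- Let V be a finite set and let r be an irreflexive binary relation (a directed graph) on V such that for every v ∈ V, the number of u with r(v,u) is at most k. Then there exists a subset U ⊆ V with |U| ≥ |V|/(2k+1) such that for every two distinct u, w ∈ U, neither r(u,w) nor r(w,u) holds. -/
open Finset

theorem stmt8_aux {V : Type*} [Fintype V] [DecidableEq V] (r : V → V → Prop)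
    [DecidableRel r] (k : ℕ)
    (hdeg : ∀ v, (Finset.univ.filter fun u => r v u).card ≤ k) :
    ∀ n (S : Finset V), S.card ≤ n → ∃ U, U ⊆ S ∧
      (∀ u ∈ U, ∀ w ∈ U, u ≠ w → ¬ r u w ∧ ¬ r w u) ∧ S.card ≤ (2 * k + 1) * U.card := by
  intro n
  induction n with
  | zero =>
    intro S hS
    exact ⟨∅, empty_subset _, by simp, by simpa using hS⟩
  | succ n ih =>
    intro S hS
    rcases S.eq_empty_or_nonempty with rfl | hne
    · exact ⟨∅, empty_subset _, by simp, by simp⟩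
    -- find v ∈ S with symmetrized degree in S at most 2k
    have hsum : ∑ v ∈ S, (S.filter fun u => r v u ∨ r u v).card ≤ ∑ _v ∈ S, 2 * k := by
      calc ∑ v ∈ S, (S.filter fun u => r v u ∨ r u v).card
          ≤ ∑ v ∈ S, ((S.filter fun u => r v u).card + (S.filter fun u => r u v).card) := by
            apply sum_le_sum
            intro v _
            rw [filter_or]
            exact card_union_le _ _
        _ = ∑ v ∈ S, (S.filter fun u => r v u).card
            + ∑ v ∈ S, (S.filter fun u => r u v).card := sum_add_distrib
        _ = ∑ v ∈ S, (S.filter fun u => r v u).card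
            + ∑ u ∈ S, (S.filter fun v => r u v).card := by
            congr 1
            simp only [card_filter]
            exact Finset.sum_comm
        _ ≤ ∑ _v ∈ S, k + ∑ _v ∈ S, k := by
            apply Nat.add_le_add <;>
            · apply sum_le_sum
              intro v _
              exact le_trans (card_le_card (filter_subset_filter _ (subset_univ S))) (hdeg v)
        _ = ∑ _v ∈ S, 2 * k := by rw [← sum_add_distrib]; apply sum_congr rfl; intros; ring
    obtain ⟨v, hvS, hv⟩ := Finset.exists_le_of_sum_le hne hsum
    set N : Finset V := S.filter fun u => u = v ∨ r v u ∨ r u v with hN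
    have hNcard : N.card ≤ 2 * k + 1 := by
      have : N ⊆ insert v (S.filter fun u => r v u ∨ r u v) := by
        intro x hx
        simp only [hN, mem_filter] at hx
        rcases hx.2 with rfl | h
        · exact mem_insert_self _ _
        · exact mem_insert_of_mem (mem_filter.2 ⟨hx.1, h⟩)
      calc N.card ≤ _ := card_le_card this
        _ ≤ (S.filter fun u => r v u ∨ r u v).card + 1 := card_insert_le _ _
        _ ≤ 2 * k + 1 := by omega
    have hvN : v ∈ N := mem_filter.2 ⟨hvS, Or.inl rfl⟩
    have hsub : (S \ N).card ≤ n := by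
      have h1 : (S \ N).card < S.card := by
        apply card_lt_card
        constructor
        · exact sdiff_subset
        · intro h
          have := h hvS
          simp [mem_sdiff, hvN] at this
      omega
    obtain ⟨U, hUsub, hUind, hUcard⟩ := ih (S \ N) hsub
    refine ⟨insert v U, ?_, ?_, ?_⟩
    · intro x hx
      rcases mem_insert.1 hx with rfl | hx
      · exact hvS
      · exact (sdiff_subset (hUsub hx))
    · have hnot : ∀ u ∈ U, ¬ r v u ∧ ¬ r u v := by
        intro u hu
        have := mem_sdiff.1 (hUsub hu)
        simp only [hN, mem_filter, not_and, not_or] at this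
        exact ⟨(this.2 this.1).2.1, (this.2 this.1).2.2⟩
      intro a ha b hb hab
      rcases mem_insert.1 ha with ha' | ha' <;> rcases mem_insert.1 hb with hb' | hb'
      · exact absurd (ha'.trans hb'.symm) hab
      · subst ha'; exact hnot b hb'
      · subst hb'; exact ⟨(hnot a ha').2, (hnot a ha').1⟩
      · exact hUind a ha' b hb' hab
    · have hvU : v ∉ U := by
        intro h
        have := mem_sdiff.1 (hUsub h)
        exact this.2 hvN
      rw [card_insert_of_notMem hvU]
      have hsd : S.card ≤ (S \ N).card + N.card := by
        rw [card_sdiff_add_card]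
        exact card_le_card subset_union_left
      calc S.card ≤ (S \ N).card + N.card := hsd
        _ ≤ (2 * k + 1) * U.card + (2 * k + 1) := by omega
        _ = (2 * k + 1) * (U.card + 1) := by ring

/-- Let `V` be a finite set and `r` an irreflexive binary relation (a
directed graph) on `V` with all out-degrees at most `k`. Then there is a subset `U ⊆ V`
with `|U| ≥ |V|/(2k+1)` such that no two distinct elements of `U` are related by `r`
in either direction. -/
theorem stmt_8 {V : Type*} [Fintype V] [DecidableEq V] (r : V → V → Prop)
    [DecidableRel r] (hirr : ∀ v, ¬ r v v) (k : ℕ)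
    (hdeg : ∀ v, (Finset.univ.filter fun u => r v u).card ≤ k) :
    ∃ U : Finset V, (Fintype.card V : ℝ) / (2 * k + 1) ≤ (U.card : ℝ) ∧
      ∀ u ∈ U, ∀ w ∈ U, u ≠ w → ¬ r u w ∧ ¬ r w u := by
  obtain ⟨U, _, hind, hcard⟩ := stmt8_aux r k hdeg (Finset.univ.card) Finset.univ le_rfl
  refine ⟨U, ?_, hind⟩
  rw [div_le_iff₀ (by positivity)]
  have : (Fintype.card V : ℝ) ≤ (2 * k + 1 : ℕ) * U.card := by
    rw [← Nat.cast_mul]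
    exact_mod_cast (show Fintype.card V ≤ (2*k+1)*U.card by simpa using hcard)
  calc (Fintype.card V : ℝ) ≤ (2 * k + 1 : ℕ) * U.card := this
    _ = U.card * (2 * k + 1) := by push_cast; ring
end

section
/- Let G be a finite simple graph in which every vertex has degree at most 3, and let 𝒫' be a finite set of pairwise edge-disjoint paths in G, each containing at least one edge. Then there exists a subset 𝒫 ⊆ 𝒫' of pairwise vertex-disjoint paths with |𝒫| ≥ |𝒫'|/9. -/
/-!
A path through a vertex `v` uses an edge at `v`, and two if `v` is internal to it. The paths are
edge-disjoint and `deg v ≤ 3`, so at most three paths pass through `v`, and `v` is internal to at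
most one of them. Hence two paths that meet share an endpoint of one of them; charge the conflict
to that path. Each endpoint lies on at most two other paths, so every path is charged at most `4`
conflicts. So every set of `m` paths spans at most `4m` conflicts, some path in it conflicts with
at most `8` others, and the greedy choice of such paths yields `n / 9` pairwise vertex-disjoint
paths.
-/

open Finset

namespace SimpleGraph

variable {ι : Type*} [DecidableEq ι] (H : SimpleGraph ι)

theorem exists_isIndepSet_of_degenerate [DecidableRel H.Adj] (d : ℕ)
    (hH : ∀ T : Finset ι, T.Nonempty → ∃ i ∈ T, #{j ∈ T | H.Adj i j} ≤ d)
    (T : Finset ι) :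
    ∃ S ⊆ T, H.IsIndepSet (S : Set ι) ∧ #T ≤ (d + 1) * #S := by
  induction T using Finset.strongInduction with
  | _ T ih =>
    rcases T.eq_empty_or_nonempty with rfl | hT
    · exact ⟨∅, Subset.rfl, by simp [IsIndepSet], by simp⟩
    obtain ⟨i, hiT, hi⟩ := hH T hT
    set T' : Finset ι := {j ∈ T.erase i | ¬H.Adj i j}
    have hT'T : T' ⊂ T := (filter_subset _ _).trans_ssubset (erase_ssubset hiT)
    obtain ⟨S, hST', hS, hcard⟩ := ih T' hT'T
    have hiS : i ∉ S := fun h => by simpa [T'] using hST' h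
    refine ⟨insert i S, insert_subset hiT (hST'.trans hT'T.subset), ?_, ?_⟩
    · rw [coe_insert, IsIndepSet, Set.pairwise_insert]
      refine ⟨hS, fun j hj _ => ⟨(mem_filter.1 (hST' hj)).2, fun h => ?_⟩⟩
      exact (mem_filter.1 (hST' hj)).2 h.symm
    · have hsplit : #{j ∈ T.erase i | H.Adj i j} + #T' + 1 = #T := by
        rw [card_filter_add_card_filter_not, card_erase_add_one hiT]
      have hnbr : #{j ∈ T.erase i | H.Adj i j} ≤ d :=
        (card_le_card (filter_subset_filter _ (erase_subset i T))).trans hi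
      rw [card_insert_of_notMem hiS, mul_add, mul_one]
      linarith

theorem exists_card_filter_adj_le_of_forall_adj_mem [DecidableRel H.Adj] {k : ℕ}
    (f : ι → Finset ι) (hf : ∀ i, #(f i) ≤ k)
    (hadj : ∀ i j, H.Adj i j → j ∈ f i ∨ i ∈ f j) (T : Finset ι) (hT : T.Nonempty) :
    ∃ i ∈ T, #{j ∈ T | H.Adj i j} ≤ 2 * k := by
  have hnbr (i : ι) : #{j ∈ T | H.Adj i j} ≤ #(f i) + #{j ∈ T | i ∈ f j} := by
    refine (card_le_card fun j hj => ?_).trans (card_union_le _ _)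
    rw [mem_filter] at hj
    rcases hadj i j hj.2 with h | h
    · exact mem_union_left _ h
    · exact mem_union_right _ (mem_filter.2 ⟨hj.1, h⟩)
  have hcount : ∑ i ∈ T, #{j ∈ T | i ∈ f j} ≤ ∑ _i ∈ T, k :=
    calc ∑ i ∈ T, #{j ∈ T | i ∈ f j} = ∑ j ∈ T, #{i ∈ T | i ∈ f j} :=
          sum_card_bipartiteAbove_eq_sum_card_bipartiteBelow (fun i j => i ∈ f j)
      _ ≤ ∑ _j ∈ T, k := sum_le_sum fun j _ =>
          (card_le_card fun _ h => (mem_filter.1 h).2).trans (hf j)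
  apply exists_le_of_sum_le hT
  calc ∑ i ∈ T, #{j ∈ T | H.Adj i j}
      ≤ ∑ i ∈ T, (#(f i) + #{j ∈ T | i ∈ f j}) := sum_le_sum fun i _ => hnbr i
    _ = ∑ i ∈ T, #(f i) + ∑ i ∈ T, #{j ∈ T | i ∈ f j} := sum_add_distrib
    _ ≤ ∑ _i ∈ T, k + ∑ _i ∈ T, k := add_le_add (sum_le_sum fun i _ => hf i) hcount
    _ = ∑ _i ∈ T, 2 * k := by rw [← sum_add_distrib, two_mul]

theorem exists_isIndepSet_of_forall_adj_mem [Fintype ι] {k : ℕ} (f : ι → Finset ι)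
    (hf : ∀ i, #(f i) ≤ k) (hadj : ∀ i j, H.Adj i j → j ∈ f i ∨ i ∈ f j) :
    ∃ S : Finset ι, H.IsIndepSet (S : Set ι) ∧ Fintype.card ι ≤ (2 * k + 1) * #S := by
  classical
  obtain ⟨S, -, hS, hcard⟩ := H.exists_isIndepSet_of_degenerate (2 * k)
    (H.exists_card_filter_adj_le_of_forall_adj_mem f hf hadj) univ
  exact ⟨S, hS, hcard⟩

end SimpleGraph

namespace SimpleGraph.Walk

variable {V : Type*} [DecidableEq V] {G : SimpleGraph V} {u w v : V}

def incidentEdges (p : G.Walk u w) (v : V) : Finset (Sym2 V) :=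
  {e ∈ p.edges.toFinset | v ∈ e}

variable {p : G.Walk u w} {e : Sym2 V}

theorem mem_incidentEdges : e ∈ p.incidentEdges v ↔ e ∈ p.edges ∧ v ∈ e := by
  simp [incidentEdges]

theorem incidentEdges_nonempty (hp : ¬p.Nil) (hv : v ∈ p.support) :
    (p.incidentEdges v).Nonempty := by
  obtain ⟨e, he, hve⟩ := (mem_support_iff_exists_mem_edges_of_not_nil hp).1 hv
  exact ⟨e, mem_incidentEdges.2 ⟨he, hve⟩⟩

theorem IsTrail.one_lt_card_incidentEdges (hp : p.IsTrail) (hv : v ∈ p.support) (hu : v ≠ u)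
    (hw : v ≠ w) : 1 < #(p.incidentEdges v) := by
  obtain ⟨e₁, he₁, hve₁⟩ := (mem_support_iff_exists_mem_edges_of_not_nil
    (not_nil_of_ne hu.symm)).1 (p.takeUntil v hv).end_mem_support
  obtain ⟨e₂, he₂, hve₂⟩ := (mem_support_iff_exists_mem_edges_of_not_nil
    (not_nil_of_ne hw)).1 (p.dropUntil v hv).start_mem_support
  refine one_lt_card.2
    ⟨e₁, mem_incidentEdges.2 ⟨p.edges_takeUntil_subset_edges hv he₁, hve₁⟩,
      e₂, mem_incidentEdges.2 ⟨p.edges_dropUntil_subset_edges hv he₂, hve₂⟩, ?_⟩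
  rintro rfl
  exact hp.disjoint_edges_takeUntil_dropUntil hv he₁ he₂

theorem incidentEdges_subset_incidenceFinset [Fintype (G.neighborSet v)] :
    p.incidentEdges v ⊆ G.incidenceFinset v := fun e he => by
  rw [mem_incidentEdges] at he
  exact (G.mem_incidenceFinset v e).2 ⟨p.edges_subset_edgeSet he.1, he.2⟩

theorem disjoint_incidentEdges {u' w' : V} {q : G.Walk u' w'} (h : p.edges.Disjoint q.edges) :
    Disjoint (p.incidentEdges v) (q.incidentEdges v) :=
  Finset.disjoint_left.2 fun _ hp hq => h (mem_incidentEdges.1 hp).1 (mem_incidentEdges.1 hq).1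

theorem IsTrail.four_le_degree [Fintype (G.neighborSet v)] {u' w' : V} {q : G.Walk u' w'}
    (hp : p.IsTrail) (hq : q.IsTrail) (hpq : p.edges.Disjoint q.edges) (hvp : v ∈ p.support)
    (hvq : v ∈ q.support) (hup : v ≠ u) (hwp : v ≠ w) (huq : v ≠ u') (hwq : v ≠ w') :
    4 ≤ G.degree v := by
  have := hp.one_lt_card_incidentEdges hvp hup hwp
  have := hq.one_lt_card_incidentEdges hvq huq hwq
  have := card_le_card (union_subset (p.incidentEdges_subset_incidenceFinset (v := v))
    (q.incidentEdges_subset_incidenceFinset (v := v)))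
  rw [card_union_of_disjoint (disjoint_incidentEdges hpq),
    card_incidenceFinset_eq_degree] at this
  omega

theorem sum_card_incidentEdges_le_degree {ι : Type*} {a b : ι → V}
    (p : ∀ i, G.Walk (a i) (b i)) (hp : Pairwise fun i j => (p i).edges.Disjoint (p j).edges)
    (s : Finset ι) (v : V) [Fintype (G.neighborSet v)] :
    ∑ i ∈ s, #((p i).incidentEdges v) ≤ G.degree v := by
  rw [← card_biUnion fun i _ j _ hij => disjoint_incidentEdges (hp hij),
    ← card_incidenceFinset_eq_degree]
  exact card_le_card (biUnion_subset.2 fun i _ => incidentEdges_subset_incidenceFinset)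

end SimpleGraph.Walk

namespace SimpleGraph

variable {V ι : Type*} {G : SimpleGraph V} {a b : ι → V} (p : ∀ i, G.Walk (a i) (b i))

def conflictGraph : SimpleGraph ι where
  Adj i j := i ≠ j ∧ ∃ v ∈ (p i).support, v ∈ (p j).support
  symm := ⟨fun _ _ ⟨hij, v, hi, hj⟩ => ⟨hij.symm, v, hj, hi⟩⟩
  loopless := ⟨fun _ h => h.1 rfl⟩

variable [DecidableEq V] [Fintype V] [DecidableRel G.Adj] [Fintype ι] {p}

theorem card_filter_mem_support_le_degree (hnil : ∀ i, ¬(p i).Nil)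
    (hp : Pairwise fun i j => (p i).edges.Disjoint (p j).edges) (v : V) :
    #{i | v ∈ (p i).support} ≤ G.degree v :=
  calc #{i | v ∈ (p i).support} = ∑ _i ∈ {i | v ∈ (p i).support}, 1 := card_eq_sum_ones _
    _ ≤ ∑ i ∈ {i | v ∈ (p i).support}, #((p i).incidentEdges v) := sum_le_sum fun i hi =>
        card_pos.2 (Walk.incidentEdges_nonempty (hnil i) (mem_filter.1 hi).2)
    _ ≤ G.degree v := Walk.sum_card_incidentEdges_le_degree p hp _ v

variable [DecidableEq ι]

variable (p) in
def throughEndpoints (i : ι) : Finset ι :=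
  ({j | a i ∈ (p j).support} : Finset ι).erase i ∪
    ({j | b i ∈ (p j).support} : Finset ι).erase i

theorem card_throughEndpoints_add_two_le (hnil : ∀ i, ¬(p i).Nil)
    (hp : Pairwise fun i j => (p i).edges.Disjoint (p j).edges) (i : ι) :
    #(throughEndpoints p i) + 2 ≤ G.degree (a i) + G.degree (b i) := by
  have ha := card_erase_add_one (by simp : i ∈ ({j | a i ∈ (p j).support} : Finset ι))
  have hb := card_erase_add_one (by simp : i ∈ ({j | b i ∈ (p j).support} : Finset ι))
  have := card_union_le (({j | a i ∈ (p j).support} : Finset ι).erase i)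
    (({j | b i ∈ (p j).support} : Finset ι).erase i)
  have := card_filter_mem_support_le_degree hnil hp (a i)
  have := card_filter_mem_support_le_degree hnil hp (b i)
  unfold throughEndpoints
  omega

theorem mem_throughEndpoints_of_conflictGraph_adj (htrail : ∀ i, (p i).IsTrail)
    (hp : Pairwise fun i j => (p i).edges.Disjoint (p j).edges) (hdeg : ∀ v, G.degree v ≤ 3)
    {i j : ι} (hadj : (conflictGraph p).Adj i j) :
    j ∈ throughEndpoints p i ∨ i ∈ throughEndpoints p j := by
  obtain ⟨hij, v, hvi, hvj⟩ := hadj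
  simp only [throughEndpoints, mem_union, mem_erase, mem_filter, mem_univ, true_and]
  by_cases hi : v = a i ∨ v = b i
  · left; rcases hi with rfl | rfl <;> simp [hij.symm, hvj]
  by_cases hj : v = a j ∨ v = b j
  · right; rcases hj with rfl | rfl <;> simp [hij, hvi]
  rw [not_or] at hi hj
  have := (htrail i).four_le_degree (htrail j) (hp hij) hvi hvj hi.1 hi.2 hj.1 hj.2
  have := hdeg v
  omega

end SimpleGraph

/-- Let `G` be a finite simple graph of maximum degree at most `3`, and let
`𝒫'` be a finite collection (indexed by a finite type `ι`) of pairwise edge-disjoint paths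
in `G`, each containing at least one edge. Then there is a subcollection of pairwise
vertex-disjoint paths of size at least `|𝒫'|/9`. -/
theorem stmt_9 {V : Type*} [Fintype V] [DecidableEq V] (G : SimpleGraph V)
    [DecidableRel G.Adj] (hdeg : ∀ v, G.degree v ≤ 3)
    {ι : Type*} [Fintype ι] (a b : ι → V) (p : ∀ i, G.Walk (a i) (b i))
    (hpath : ∀ i, (p i).IsPath) (hlen : ∀ i, 0 < (p i).length)
    (hedisj : ∀ i j, i ≠ j → ∀ e ∈ (p i).edges, e ∉ (p j).edges) :
    ∃ S : Finset ι, (Fintype.card ι : ℝ) / 9 ≤ (S.card : ℝ) ∧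
      ∀ i ∈ S, ∀ j ∈ S, i ≠ j → ∀ v ∈ (p i).support, v ∉ (p j).support := by
  classical
  have hp : Pairwise fun i j => (p i).edges.Disjoint (p j).edges :=
    fun i j hij e => hedisj i j hij e
  have hnil (i : ι) : ¬(p i).Nil := SimpleGraph.Walk.not_nil_iff_lt_length.2 (hlen i)
  have hcharge (i : ι) : #(SimpleGraph.throughEndpoints p i) ≤ 4 := by
    have := SimpleGraph.card_throughEndpoints_add_two_le hnil hp i
    have := hdeg (a i)
    have := hdeg (b i)
    omega
  have hconflict (i j : ι) (hij : (SimpleGraph.conflictGraph p).Adj i j) :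
      j ∈ SimpleGraph.throughEndpoints p i ∨ i ∈ SimpleGraph.throughEndpoints p j :=
    SimpleGraph.mem_throughEndpoints_of_conflictGraph_adj (fun i => (hpath i).isTrail) hp hdeg hij
  obtain ⟨S, hS, hcard⟩ :=
    (SimpleGraph.conflictGraph p).exists_isIndepSet_of_forall_adj_mem _ hcharge hconflict
  refine ⟨S, ?_, fun i hi j hj hij v hvi hvj => hS hi hj hij ⟨hij, v, hvi, hvj⟩⟩
  rw [div_le_iff₀ (by norm_num)]
  exact_mod_cast (by omega : Fintype.card ι ≤ #S * 9)
end

section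
/- Let n, P be integers with 0 < P ≤ n, and let μ be a real number with 0 < μ ≤ P. Fix any set S of ⌊nμ/P⌋ positions among 1,…,n. Then the probability, over a uniformly random permutation of the n items, that at least ⌈4μ⌉ of the positions of S are occupied by pink items, is at most 4^{−μ}. -/
/-!
Union bound over the `k`-subsets `T` of `S`, with `k = ⌈4μ⌉`. Since `Perm α` acts transitively
on the embeddings `T ↪ α`, the restriction of a uniform permutation to `T` is a uniform
embedding, so it maps `T` into the pink items with probability `P^(k) / n^(k) ≤ (P/n)^k`.
The total is at most `C(|S|, k) (P/n)^k ≤ (|S| P / n)^k / k! ≤ μ^k / k!`, and for `k ≥ 4μ`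
the bound `k^k / k! ≤ e^k` gives `μ^k / k! ≤ (e/4)^k ≤ 4^(-μ)`, as `(e/4)^4 ≤ 1/4`.
-/

open Finset Nat

namespace MulAction

variable {G X : Type*} [Group G] [MulAction G X] [Fintype G] [DecidableEq X]

theorem card_filter_smul_eq [IsPretransitive G X] (a y : X) :
    #{g : G | g • a = y} = #{g : G | g • a = a} := by
  obtain ⟨g₀, rfl⟩ := exists_smul_eq G a y
  refine card_nbij' (g₀⁻¹ * ·) (g₀ * ·) ?_ ?_ ?_ ?_ <;> intro g hg <;>
    simp_all [mul_smul]

theorem card_filter_smul_mem [IsPretransitive G X] (a : X) (Y : Finset X) :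
    #{g : G | g • a ∈ Y} = #Y * #{g : G | g • a = a} := by
  rw [card_eq_sum_card_fiberwise (s := {g : G | g • a ∈ Y}) (t := Y) (f := (· • a))
    (fun g hg => by simpa using hg), ← smul_eq_mul, ← sum_const]
  refine sum_congr rfl fun y hy => ?_
  rw [filter_filter, ← card_filter_smul_eq a y]
  congr 1
  exact filter_congr fun g _ => ⟨And.right, fun h => ⟨h ▸ hy, h⟩⟩

theorem card_filter_smul_mem_mul_card [Fintype X] [IsPretransitive G X] (a : X) (Y : Finset X) :
    #{g : G | g • a ∈ Y} * Fintype.card X = #Y * Fintype.card G := by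
  have hG := card_filter_smul_mem (G := G) a univ
  simp only [mem_univ, filter_true, Finset.card_univ] at hG
  rw [card_filter_smul_mem, hG]
  ring

end MulAction

theorem Nat.descFactorial_div_descFactorial_le_pow {P n : ℕ} (h : P ≤ n) :
    ∀ k : ℕ, (P.descFactorial k : ℝ) / n.descFactorial k ≤ ((P : ℝ) / n) ^ k
  | 0 => by simp
  | k + 1 => by
    have step : ((P - k : ℕ) : ℝ) / (n - k : ℕ) ≤ (P : ℝ) / n := by
      rcases le_or_gt n k with hnk | hkn
      · rw [Nat.sub_eq_zero_of_le hnk, cast_zero, div_zero]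
        positivity
      · rw [div_le_div_iff₀ (by simpa using hkn) (cast_pos.2 (k.zero_le.trans_lt hkn))]
        have hcross : (P - k) * n ≤ P * (n - k) := by
          rw [Nat.sub_mul, Nat.mul_sub]
          exact Nat.sub_le_sub_left (by rw [mul_comm]; exact Nat.mul_le_mul_left k h) _
        exact_mod_cast hcross
    rw [descFactorial_succ, descFactorial_succ, cast_mul, cast_mul, mul_div_mul_comm, pow_succ,
      mul_comm]
    exact mul_le_mul (Nat.descFactorial_div_descFactorial_le_pow h k) step (by positivity)
      (by positivity)

namespace Equiv.Perm

variable {α : Type*} [Fintype α] [DecidableEq α]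

theorem card_mapsTo_mul_descFactorial (T B : Finset α) :
    #{σ : Perm α | ∀ i ∈ T, σ i ∈ B} * (Fintype.card α).descFactorial #T
      = (#B).descFactorial #T * (Fintype.card α)! := by
  have : MulAction.IsPretransitive (Perm α) (T ↪ α) := ⟨exists_smul_eq_embedding⟩
  have key := MulAction.card_filter_smul_mem_mul_card (G := Perm α)
    (Function.Embedding.subtype (· ∈ T)) {f | ∀ i, f i ∈ B}
  rw [Fintype.card_embedding_eq, Fintype.card_perm, Fintype.card_coe] at key
  convert key using 3
  · simp [Function.Embedding.smul_apply]
  · rw [← Fintype.card_subtype]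
    calc (#B).descFactorial #T = Fintype.card (T ↪ (B : Set α)) := by
          simp [Fintype.card_embedding_eq]
      _ = _ := (Fintype.card_congr (Equiv.codRestrict T (B : Set α))).symm

theorem card_le_sum_powersetCard (S B : Finset α) (k : ℕ) :
    #{σ : Perm α | k ≤ #{i ∈ S | σ i ∈ B}}
      ≤ ∑ T ∈ S.powersetCard k, #{σ : Perm α | ∀ i ∈ T, σ i ∈ B} := by
  refine (card_le_card fun σ hσ => ?_).trans card_biUnion_le
  obtain ⟨T, hTS, hTk⟩ := exists_subset_card_eq (mem_filter.mp hσ).2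
  simp only [mem_biUnion, mem_powersetCard, mem_filter, mem_univ, true_and]
  exact ⟨T, ⟨hTS.trans (filter_subset _ _), hTk⟩, fun i hi => (mem_filter.mp (hTS hi)).2⟩

theorem card_le_factorial_mul_choose_mul_pow (S B : Finset α) (k : ℕ) :
    (#{σ : Perm α | k ≤ #{i ∈ S | σ i ∈ B}} : ℝ)
      ≤ (Fintype.card α)! * ((#S).choose k * ((#B : ℝ) / Fintype.card α) ^ k) := by
  set n := Fintype.card α
  have hT : ∀ T ∈ S.powersetCard k, (#{σ : Perm α | ∀ i ∈ T, σ i ∈ B} : ℝ)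
      = n ! * ((#B).descFactorial k / n.descFactorial k) := by
    intro T hT
    rw [mem_powersetCard] at hT
    have hpos : (0 : ℝ) < n.descFactorial k :=
      cast_pos.2 (descFactorial_pos.2 (hT.2 ▸ card_le_univ T))
    rw [mul_div_assoc', eq_div_iff hpos.ne', ← hT.2, mul_comm (n ! : ℝ)]
    exact_mod_cast card_mapsTo_mul_descFactorial T B
  calc (#{σ : Perm α | k ≤ #{i ∈ S | σ i ∈ B}} : ℝ)
      ≤ ∑ T ∈ S.powersetCard k, (#{σ : Perm α | ∀ i ∈ T, σ i ∈ B} : ℝ) := by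
        exact_mod_cast card_le_sum_powersetCard S B k
    _ = (#S).choose k * (n ! * ((#B).descFactorial k / n.descFactorial k)) := by
        rw [sum_congr rfl hT, sum_const, card_powersetCard, nsmul_eq_mul]
    _ ≤ (#S).choose k * (n ! * ((#B : ℝ) / n) ^ k) := by
        gcongr
        exact descFactorial_div_descFactorial_le_pow (card_le_univ B) k
    _ = n ! * ((#S).choose k * ((#B : ℝ) / n) ^ k) := by ring

end Equiv.Perm

theorem pow_div_factorial_le_four_rpow_neg {μ : ℝ} (hμ : 0 ≤ μ) {k : ℕ} (hk : 4 * μ ≤ k) :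
    μ ^ k / k ! ≤ (4 : ℝ) ^ (-μ) := by
  have he : (Real.exp 1 / 4) ^ 4 ≤ 1 / 4 := by
    have := Real.exp_one_lt_d9
    calc (Real.exp 1 / 4) ^ 4 ≤ (2.7182818286 / 4) ^ 4 := by gcongr
      _ ≤ 1 / 4 := by norm_num
  calc μ ^ k / k ! ≤ ((k : ℝ) / 4) ^ k / k ! := by gcongr; linarith
    _ = ((k : ℝ) ^ k / k !) / 4 ^ k := by rw [div_pow]; ring
    _ ≤ Real.exp k / 4 ^ k := by gcongr; exact Real.pow_div_factorial_le_exp _ k.cast_nonneg k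
    _ = ((Real.exp 1 / 4) ^ 4) ^ ((k : ℝ) / 4) := by
        rw [← Real.rpow_natCast_mul (by positivity), ← Real.exp_one_pow, ← div_pow,
          ← Real.rpow_natCast]
        congr 1
        push_cast
        ring
    _ ≤ (1 / 4) ^ ((k : ℝ) / 4) := by gcongr
    _ ≤ (1 / 4) ^ μ := Real.rpow_le_rpow_of_exponent_ge (by norm_num) (by norm_num) (by linarith)
    _ = (4 : ℝ) ^ (-μ) := by rw [Real.rpow_neg (by norm_num), one_div, Real.inv_rpow (by norm_num)]

theorem stmt_15_general (n P : ℕ)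
    (μ : ℝ) (hμ0 : 0 < μ)
    (Pink : Finset (Fin n)) (hPink : Pink.card = P)
    (S : Finset (Fin n)) (hS : S.card = ⌊(n : ℝ) * μ / (P : ℝ)⌋₊) :
    (({σ : Equiv.Perm (Fin n) |
        ⌈4 * μ⌉₊ ≤ (S.filter fun i => σ i ∈ Pink).card}).ncard : ℝ)
      ≤ (n.factorial : ℝ) * (4 : ℝ) ^ (-μ) := by
  set k := ⌈4 * μ⌉₊
  have hSP : (#S : ℝ) * (P / n) ≤ μ :=
    calc (#S : ℝ) * (P / n) ≤ n * μ / P * (P / n) := by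
          gcongr
          rw [hS]
          exact floor_le (by positivity)
      -- `n / n ≤ 1` and `P / P ≤ 1` also hold when `n = 0` or `P = 0`, where `x / 0 = 0`.
      _ = μ * ((n / n) * (P / P)) := by ring
      _ ≤ μ * (1 * 1) := by gcongr <;> exact div_self_le_one _
      _ = μ := by ring
  rw [Set.ncard_eq_toFinset_card', Set.toFinset_ofPred]
  calc _ ≤ (n ! : ℝ) * ((#S).choose k * ((P : ℝ) / n) ^ k) := by
        simpa [hPink] using Equiv.Perm.card_le_factorial_mul_choose_mul_pow S Pink k
    _ ≤ n ! * ((#S : ℝ) ^ k / k ! * ((P : ℝ) / n) ^ k) := by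
        gcongr
        exact choose_le_pow_div k #S
    _ = n ! * (((#S : ℝ) * (P / n)) ^ k / k !) := by ring
    _ ≤ n ! * (μ ^ k / k !) := by gcongr
    _ ≤ n ! * (4 : ℝ) ^ (-μ) := by
        gcongr
        exact pow_div_factorial_le_four_rpow_neg hμ0.le (le_ceil _)

/-- There are `n` items, a fixed set `Pink` of `P` of them pink
(`0 < P ≤ n`), and `0 < μ ≤ P`. For any fixed set `S` of `⌊nμ/P⌋` positions, the number of
permutations for which at least `⌈4μ⌉` of the positions of `S` are occupied by pink items
is at most `n! · 4^{-μ}`. -/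
theorem stmt_15 (n P : ℕ) (hP : 0 < P) (hPn : P ≤ n)
    (μ : ℝ) (hμ0 : 0 < μ) (hμP : μ ≤ (P : ℝ))
    (Pink : Finset (Fin n)) (hPink : Pink.card = P)
    (S : Finset (Fin n)) (hS : S.card = ⌊(n : ℝ) * μ / (P : ℝ)⌋₊) :
    (({σ : Equiv.Perm (Fin n) |
        ⌈4 * μ⌉₊ ≤ (S.filter fun i => σ i ∈ Pink).card}).ncard : ℝ)
      ≤ (n.factorial : ℝ) * (4 : ℝ) ^ (-μ) :=
  stmt_15_general n P μ hμ0 Pink hPink S hS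
end
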